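/- Let p be a prime number and let (ℚ/ℤ)' denote the subgroup of ℚ/ℤ consisting of the elements whose order is not divisible by p. Then the endomorphism ring of the abelian group (ℚ/ℤ)' is commutative: for any two additive group endomorphisms f, g of (ℚ/ℤ)' one has f ∘ g = g ∘ f. -/

import Mathlib

/-!
In `ℚ/ℤ` the elements killed by `n` form the cyclic group generated by `1/n`, and any element of
order `n` generates it. An endomorphism can only lower orders, so it maps every element `x` of a
torsion subgroup into `ℤ • x`; endomorphisms acting on each `x` as multiplication by integers
commute.
-/

open AddSubgroup

namespace AddMonoidHom

theorem comp_comm_of_forall_mem_zmultiples {G : Type*} [AddCommGroup G] {f g : G →+ G}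
    (hf : ∀ x, f x ∈ zmultiples x) (hg : ∀ x, g x ∈ zmultiples x) : f.comp g = g.comp f := by
  ext x
  obtain ⟨a, ha⟩ := hf x
  obtain ⟨b, hb⟩ := hg x
  simp only [comp_apply, ← ha, ← hb, map_zsmul, smul_comm a b]

end AddMonoidHom

namespace AddCircle

variable {𝕜 : Type*} [Field 𝕜] [LinearOrder 𝕜] [IsStrictOrderedRing 𝕜] {p : 𝕜} [Fact (0 < p)]

theorem mem_zmultiples_period_div_of_nsmul_eq_zero {n : ℕ} (hn : 0 < n) {v : AddCircle p}
    (hv : n • v = 0) : v ∈ zmultiples ((p / n : 𝕜) : AddCircle p) := by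
  obtain ⟨m, -, rfl⟩ := (AddCircle.nsmul_eq_zero_iff hn).1 hv
  rw [natCast_div_mul_eq_nsmul]
  exact nsmul_mem (mem_zmultiples _) m

theorem period_div_addOrderOf_mem_zmultiples {u : AddCircle p} (hu : IsOfFinAddOrder u) :
    ((p / addOrderOf u : 𝕜) : AddCircle p) ∈ zmultiples u := by
  obtain ⟨m, -, hm, hu'⟩ := (addOrderOf_eq_pos_iff hu.addOrderOf_pos).1 rfl
  rw [natCast_div_mul_eq_nsmul] at hu'
  have hgen := mem_zmultiples_nsmul_iff (k := m) (g := ((p / addOrderOf u : 𝕜) : AddCircle p))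
  rw [addOrderOf_period_div hu.addOrderOf_pos, hu'] at hgen
  exact hgen.2 hm

theorem mem_zmultiples_of_addOrderOf_dvd {u v : AddCircle p} (hu : IsOfFinAddOrder u)
    (h : addOrderOf v ∣ addOrderOf u) : v ∈ zmultiples u :=
  zmultiples_le_of_mem (period_div_addOrderOf_mem_zmultiples hu)
    (mem_zmultiples_period_div_of_nsmul_eq_zero hu.addOrderOf_pos
      (addOrderOf_dvd_iff_nsmul_eq_zero.1 h))

theorem apply_mem_zmultiples {H : AddSubgroup (AddCircle p)} (f : H →+ H) {x : H}
    (hx : IsOfFinAddOrder x) : f x ∈ zmultiples x := by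
  have hfx : addOrderOf (f x : AddCircle p) ∣ addOrderOf (x : AddCircle p) := by
    rw [addOrderOf_coe, addOrderOf_coe]
    exact addOrderOf_map_dvd f x
  obtain ⟨k, hk⟩ := mem_zmultiples_of_addOrderOf_dvd (AddSubmonoid.isOfFinAddOrder_coe.2 hx) hfx
  exact ⟨k, Subtype.ext hk⟩

theorem comp_comm_of_isAddTorsion {H : AddSubgroup (AddCircle p)} (hH : IsAddTorsion H)
    (f g : H →+ H) : f.comp g = g.comp f :=
  AddMonoidHom.comp_comm_of_forall_mem_zmultiples (fun x ↦ apply_mem_zmultiples f (hH x))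
    (fun x ↦ apply_mem_zmultiples g (hH x))

end AddCircle

/-- The subgroup `(ℚ/ℤ)'` of `ℚ/ℤ` consisting of the elements whose order is not
divisible by the prime `p`. -/
def primeToPart (p : ℕ) (hp : p.Prime) : AddSubgroup (AddCircle (1 : ℚ)) where
  carrier := {x | ¬ (p ∣ addOrderOf x)}
  zero_mem' := by
    simp only [Set.mem_setOf_eq, addOrderOf_zero, Nat.dvd_one]
    exact hp.ne_one
  add_mem' := by
    intro a b ha hb hdvd
    have h1 : addOrderOf (a + b) ∣ addOrderOf a * addOrderOf b :=
      (AddCommute.all a b).addOrderOf_add_dvd_mul_addOrderOf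
    rcases (Nat.Prime.dvd_mul hp).1 (hdvd.trans h1) with h | h
    · exact ha h
    · exact hb h
  neg_mem' := by
    intro a ha
    simpa only [Set.mem_setOf_eq, addOrderOf_neg] using ha

theorem isAddTorsion_primeToPart (p : ℕ) (hp : p.Prime) : IsAddTorsion (primeToPart p hp) :=
  fun x ↦ addOrderOf_pos_iff.1 <| Nat.pos_of_ne_zero fun h ↦ x.2 <| by
    rw [addOrderOf_coe, h]
    exact dvd_zero p

theorem stmt_10 (p : ℕ) (hp : p.Prime)
    (f g : primeToPart p hp →+ primeToPart p hp) :
    f.comp g = g.comp f :=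
  AddCircle.comp_comm_of_isAddTorsion (isAddTorsion_primeToPart p hp) f g
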